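/- Let X be a compact Hausdorff extremally disconnected topological space, let n be a positive natural number, and let A = C(X, M_n(ℂ)) be the algebra of continuous functions from X to the n×n complex matrices, with pointwise operations. If Δ : A → A is a 2-local inner derivation, then there exists a single element a ∈ A such that Δ(x) = a·x − x·a for all x ∈ A; in particular Δ is itself an inner derivation. -/

import Mathlib

/-!
Let `D = diag(0, 1, …, n - 1)`, let `N` be the nilpotent upper shift, and let `a` implement `Δ`
at the constants `D` and `N`. For a constant matrix unit `E`, an element implementing `Δ` at `E`
and `D` differs from `a` by a pointwise diagonal function, and one implementing `Δ` at `E` and `N`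
differs from `a` by a function with constant diagonal; comparing the two on `E` gives
`Δ E = [a, E]`. For arbitrary `x`, an element `w` implementing `Δ` at `x` and at `E_{lk}` makes
`w - a` commute with `E_{lk}`, which kills the `(k, l)` entry of `[w - a, x]`, the trace of
`[w - a, x] E_{lk}`.
-/

open Matrix

def IsTwoLocalInnerDerivation {A : Type*} [Ring A] (Δ : A → A) : Prop :=
  ∀ x y : A, ∃ a : A, Δ x = a * x - x * a ∧ Δ y = a * y - y * a

theorem commute_sub_of_commutator_eq {A : Type*} [Ring A] {a b y : A}
    (h : a * y - y * a = b * y - y * b) : Commute (a - b) y :=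
  sub_eq_zero.mp <| by
    rw [show (a - b) * y - y * (a - b) = (a * y - y * a) - (b * y - y * b) by noncomm_ring, h,
      sub_self]

namespace IsTwoLocalInnerDerivation

variable {A : Type*} [Ring A] {Δ : A → A}

theorem eq_commutator_of_forall_commute {u v a e : A} (hΔ : IsTwoLocalInnerDerivation Δ)
    (hu : Δ u = a * u - u * a) (hv : Δ v = a * v - v * a)
    (he : ∀ p q : A, Commute p u → Commute q v →
      p * e - e * p = q * e - e * q → Commute p e) :
    Δ e = a * e - e * a := by
  obtain ⟨b, hbe, hbu⟩ := hΔ e u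
  obtain ⟨c, hce, hcv⟩ := hΔ e v
  have commutator_sub (z : A) :
      (z - a) * e - e * (z - a) = (z * e - e * z) - (a * e - e * a) := by noncomm_ring
  have hp : Commute (b - a) e := by
    refine he _ (c - a) (commute_sub_of_commutator_eq (hbu ▸ hu))
      (commute_sub_of_commutator_eq (hcv ▸ hv)) ?_
    rw [commutator_sub b, commutator_sub c, ← hbe, ← hce]
  rw [hbe, ← sub_eq_zero, ← commutator_sub b, hp.eq, sub_self]

theorem exists_commute_of_eq_commutator {a e : A} (hΔ : IsTwoLocalInnerDerivation Δ)
    (he : Δ e = a * e - e * a) (x : A) :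
    ∃ d, Commute d e ∧ Δ x - (a * x - x * a) = d * x - x * d := by
  obtain ⟨w, hwx, hwe⟩ := hΔ x e
  exact ⟨w - a, commute_sub_of_commutator_eq (hwe ▸ he), by rw [hwx]; noncomm_ring⟩

end IsTwoLocalInnerDerivation

namespace Matrix

variable {n : Type*} [Fintype n] [DecidableEq n] {R : Type*}

theorem apply_eq_zero_of_commute_diagonal [CommRing R] [NoZeroDivisors R] {d : n → R}
    (hd : Function.Injective d) {p : Matrix n n R} (h : Commute p (diagonal d)) {i j : n}
    (hij : i ≠ j) : p i j = 0 := by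
  have hij' := congr_fun₂ h.eq i j
  rw [mul_diagonal, diagonal_mul] at hij'
  have : p i j * (d j - d i) = 0 := by linear_combination hij'
  exact (mul_eq_zero.mp this).resolve_right (sub_ne_zero.mpr (hd.ne hij.symm))

theorem commute_single_of_commutator_eq [Ring R] {p q : Matrix n n R}
    (hp : ∀ i j, i ≠ j → p i j = 0) (hq : ∀ i j, q i i = q j j) {k l : n}
    (h : p * single k l 1 - single k l 1 * p = q * single k l 1 - single k l 1 * q) :
    Commute p (single k l 1) := by
  have hkl := congr_fun₂ h k l
  simp only [sub_apply, mul_single_apply_same, single_mul_apply_same, mul_one, one_mul,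
    hq k l, sub_self, sub_eq_zero] at hkl
  ext i j
  by_cases hj : j = l
  · subst hj
    by_cases hi : i = k
    · simp [hi, hkl]
    · simp [hi, hp i k hi]
  · by_cases hi : i = k
    · simp [hi, hj, hp l j (Ne.symm hj)]
    · simp [hi, hj]

theorem commutator_apply_eq_zero_of_commute_single [CommRing R] {d : Matrix n n R} {k l : n}
    (hd : Commute d (single l k 1)) (x : Matrix n n R) : (d * x - x * d) k l = 0 := by
  have := trace_mul_single (d * x - x * d) l k (1 : R)
  simp only [MulOpposite.op_one, one_smul] at this
  rw [← this, sub_mul, trace_sub, Matrix.mul_assoc, Matrix.mul_assoc, hd.eq, trace_mul_comm d,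
    Matrix.mul_assoc, sub_self]

def upperShift (n : ℕ) (R : Type*) [Zero R] [One R] : Matrix (Fin n) (Fin n) R :=
  of fun i j => if (i : ℕ) + 1 = j then 1 else 0

theorem diag_eq_of_commute_upperShift [Semiring R] {n : ℕ} {q : Matrix (Fin n) (Fin n) R}
    (h : Commute q (upperShift n R)) (i j : Fin n) : q i i = q j j := by
  have adjacent (m : ℕ) (hm : m + 1 < n) :
      q ⟨m, by omega⟩ ⟨m, by omega⟩ = q ⟨m + 1, hm⟩ ⟨m + 1, hm⟩ := by
    have := congr_fun₂ h.eq ⟨m, by omega⟩ ⟨m + 1, hm⟩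
    rw [mul_apply, mul_apply, Fintype.sum_eq_single ⟨m, by omega⟩,
      Fintype.sum_eq_single ⟨m + 1, hm⟩] at this
    · simpa [upperShift] using this
    all_goals
      intro x hx
      simp only [upperShift, of_apply, ne_eq, Fin.ext_iff] at hx ⊢
      split_ifs <;> simp_all
  have eq_at_zero (m : ℕ) (hm : m < n) :
      q ⟨m, hm⟩ ⟨m, hm⟩ = q ⟨0, by omega⟩ ⟨0, by omega⟩ := by
    induction m with
    | zero => rfl
    | succ m ih => rw [← adjacent m hm, ih]
  rw [eq_at_zero i i.2, eq_at_zero j j.2]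

end Matrix

theorem ContinuousMap.commute_iff {X M : Type*} [TopologicalSpace X] [TopologicalSpace M] [Mul M]
    [ContinuousMul M] {f g : C(X, M)} : Commute f g ↔ ∀ t, Commute (f t) (g t) :=
  ⟨fun h t => DFunLike.congr_fun h.eq t, fun h => ContinuousMap.ext h⟩

open ContinuousMap in
theorem IsTwoLocalInnerDerivation.exists_eq_commutator_continuousMap_matrix {K : Type*}
    [CommRing K] [NoZeroDivisors K] [CharZero K] [TopologicalSpace K] [IsTopologicalRing K]
    {X : Type*} [TopologicalSpace X] {n : ℕ}
    {Δ : C(X, Matrix (Fin n) (Fin n) K) → C(X, Matrix (Fin n) (Fin n) K)}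
    (hΔ : IsTwoLocalInnerDerivation Δ) : ∃ a, ∀ x, Δ x = a * x - x * a := by
  obtain ⟨a, hu, hv⟩ :=
    hΔ (const X (diagonal fun i : Fin n => (i : K))) (const X (upperShift n K))
  have hsingle (k l : Fin n) :
      Δ (const X (single k l 1)) = a * const X (single k l 1) - const X (single k l 1) * a := by
    have hD : Function.Injective fun i : Fin n => (i : K) :=
      Nat.cast_injective.comp Fin.val_injective
    refine hΔ.eq_commutator_of_forall_commute hu hv fun p q hp hq hpq =>
      commute_iff.mpr fun t => ?_
    exact commute_single_of_commutator_eq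
      (fun i j => apply_eq_zero_of_commute_diagonal hD (commute_iff.mp hp t))
      (diag_eq_of_commute_upperShift (commute_iff.mp hq t)) (DFunLike.congr_fun hpq t)
  refine ⟨a, fun x => ?_⟩
  ext t k l
  obtain ⟨d, hd, hx⟩ := hΔ.exists_commute_of_eq_commutator (hsingle l k) x
  rw [← sub_eq_zero]
  simpa using congr($hx t k l).trans
    (commutator_apply_eq_zero_of_commute_single (commute_iff.mp hd t) (x t))

theorem twoLocal_inner_derivation_is_inner_CX_Mn_general
    (X : Type*) [TopologicalSpace X]
    (n : ℕ)
    (Δ : C(X, Matrix (Fin n) (Fin n) ℂ) → C(X, Matrix (Fin n) (Fin n) ℂ))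
    (h2loc : ∀ x y : C(X, Matrix (Fin n) (Fin n) ℂ),
      ∃ a : C(X, Matrix (Fin n) (Fin n) ℂ),
        Δ x = a * x - x * a ∧ Δ y = a * y - y * a) :
    ∃ a : C(X, Matrix (Fin n) (Fin n) ℂ), ∀ x, Δ x = a * x - x * a :=
  IsTwoLocalInnerDerivation.exists_eq_commutator_continuousMap_matrix h2loc

/-- Every 2-local inner derivation on `C(X, Mₙ(ℂ))`, for `X` a compact Hausdorff
extremally disconnected space, is an inner derivation: a single implementing
element can be chosen uniformly for all arguments. -/
theorem twoLocal_inner_derivation_is_inner_CX_Mn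
    (X : Type*) [TopologicalSpace X] [CompactSpace X] [T2Space X]
    [ExtremallyDisconnected X]
    (n : ℕ) (hn : 0 < n)
    (Δ : C(X, Matrix (Fin n) (Fin n) ℂ) → C(X, Matrix (Fin n) (Fin n) ℂ))
    (h2loc : ∀ x y : C(X, Matrix (Fin n) (Fin n) ℂ),
      ∃ a : C(X, Matrix (Fin n) (Fin n) ℂ),
        Δ x = a * x - x * a ∧ Δ y = a * y - y * a) :
    ∃ a : C(X, Matrix (Fin n) (Fin n) ℂ), ∀ x, Δ x = a * x - x * a :=
  twoLocal_inner_derivation_is_inner_CX_Mn_general X n Δ h2loc
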